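/- arXiv:0902.2286 — 3 statements merged into one kernel-verified Lean document; each statement's English description precedes it below -/
import Mathlib

section
/- Let p be a finite binary sequence (a word over {0,1}). Define the 10-elimination E(p) as the word obtained from p by deleting every occurrence of the factor '10' (i.e., every position j with p_j = 1 and p_{j+1} = 0, deleting both letters simultaneously for all such pairs at once). Then the number of occurrences of the factor '10' in E(p) is at most the number of occurrences of the factor '10' in p. -/
/-- A path is a finite binary sequence; `true` = 1, `false` = 0.
The 10-elimination simultaneously deletes all adjacent factors `10`. -/
def elim : List Bool → List Bool
  | [] => []
  | true :: false :: rest => elim rest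
  | a :: rest => a :: elim rest

/-- The number of 10-pairs (occurrences of the factor `10`) in a word. -/
def pairCount (p : List Bool) : ℕ :=
  ((p.zip p.tail).filter (fun x => x.1 && !x.2)).length

lemma pairCount_nil : pairCount [] = 0 := rfl

lemma pairCount_single (a : Bool) : pairCount [a] = 0 := rfl

lemma pairCount_cons_cons (a b : Bool) (l : List Bool) :
    pairCount (a :: b :: l) = (if a && !b then 1 else 0) + pairCount (b :: l) := by
  simp only [pairCount, List.zip, List.tail, List.zipWith, List.filter]
  cases a <;> cases b <;> simp [Nat.add_comm]

lemma pairCount_false_cons (l : List Bool) : pairCount (false :: l) = pairCount l := by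
  cases l with
  | nil => rfl
  | cons b t => rw [pairCount_cons_cons]; simp

lemma le_pairCount_cons (a : Bool) (l : List Bool) : pairCount l ≤ pairCount (a :: l) := by
  cases l with
  | nil => simp [pairCount_nil, pairCount_single]
  | cons b t => rw [pairCount_cons_cons]; omega

/-- extra penalty: 1 if `elim l` begins with `false` while `l` begins with `true`. -/
def extra (l : List Bool) : ℕ :=
  if (elim l).head? = some false ∧ l.head? = some true then 1 else 0

lemma extra_le_one (l : List Bool) : extra l ≤ 1 := by
  unfold extra; split <;> omega

lemma main_lemma (l : List Bool) : pairCount (elim l) + extra l ≤ pairCount l := by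
  induction l using elim.induct with
  | case1 =>
      simp [elim, extra, pairCount_nil]
  | case2 rest ih =>
      -- l = true :: false :: rest, elim l = elim rest
      have h1 : pairCount (elim (true :: false :: rest)) = pairCount (elim rest) := by
        simp [elim]
      have h2 : extra (true :: false :: rest) ≤ 1 := extra_le_one _
      have h3 : pairCount rest ≤ pairCount (false :: rest) := le_pairCount_cons _ _
      have h4 : pairCount (true :: false :: rest) = 1 + pairCount (false :: rest) := by
        rw [pairCount_cons_cons]; simp
      have := ih
      omega
  | case3 a rest h1 ih =>
      -- l = a :: rest, not (a = true ∧ rest starts with false); elim l = a :: elim rest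
      have helim : elim (a :: rest) = a :: elim rest := by
        cases a with
        | false => simp [elim]
        | true =>
          cases rest with
          | nil => simp [elim]
          | cons b t =>
            cases b with
            | false => exact (h1 t rfl rfl).elim
            | true => simp [elim]
      rw [helim]
      cases a with
      | false =>
        rw [pairCount_false_cons, pairCount_false_cons]
        have hextra : extra (false :: rest) = 0 := by
          unfold extra; rw [helim]; simp
        omega
      | true =>
        cases rest with
        | nil => simp [elim, extra, pairCount_nil, pairCount_single]
        | cons b t =>
          cases b with
          | false => exact (h1 t rfl rfl).elim
          | true =>
            -- l = true :: true :: t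
            have hextra : extra (true :: true :: t) = 0 := by
              unfold extra; rw [helim]; simp
            rw [hextra]
            rw [pairCount_cons_cons true true t]
            -- goal: pairCount (true :: elim (true::t)) + 0 ≤ 0 + pairCount (true::t)
            have key : pairCount (true :: elim (true :: t)) ≤
                pairCount (elim (true :: t)) + extra (true :: t) := by
              cases h : elim (true :: t) with
              | nil => simp [pairCount_single, pairCount_nil]
              | cons c s =>
                rw [pairCount_cons_cons]
                cases c with
                | false =>
                  have : extra (true :: t) = 1 := by unfold extra; rw [h]; simp
                  rw [this]; simp [Nat.add_comm]
                | true => simp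
            have := ih
            omega

theorem stmt0 (p : List Bool) : pairCount (elim p) ≤ pairCount p := by
  have := main_lemma p
  omega
end

section
/- Let p be a binary path of length L with strictly more 0s than 1s (λ_1 > λ_2), with rigged configuration (ν, J), where λ_2 = |ν|. Then for every i with 1 ≤ i < ν_1 (i.e., for every row length strictly less than the longest), the vacancy number is strictly positive: P_i(ν) = L − 2Q_i(ν) > 0, where Q_i(ν) = Σ_a min(i, ν_a). Moreover P_{ν_1}(ν) ≥ L − 2λ_2 ≥ 0. -/
/-- `Q_i(ν) = Σ_a min(i, ν_a)`, where the configuration is recorded as a list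
of (row length, rigging) pairs. -/
def Qcfg (ν : List (ℕ × ℤ)) (i : ℕ) : ℤ := (ν.map (fun r => (min i r.1 : ℤ))).sum

/-- One step of the `A₁⁽¹⁾` rigged configuration bijection: processing the
letter `a` at (1-indexed) position `b` of the path, with `prev` the previous
letter.  A letter 0 does nothing; a letter 1 preceded by 0 creates a new
length-1 string with rigging `b - 2(ℓ(ν)+1)`; a letter 1 preceded by 1 adds a
box to a longest singular string (a row `(i, J)` with `J = (b-1) - 2 Q_i(ν)`,
the vacancy number of the length `b-1` prefix), the new rigging being
`b - 2 Σ_j min(i+1, ν_j)`. -/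
def rcStep (b : ℕ) (prev : Bool) (a : Bool) (ν : List (ℕ × ℤ)) : List (ℕ × ℤ) :=
  if a = false then ν
  else if prev = false then
    ((1 : ℕ), (b : ℤ) - 2 * ((ν.length : ℤ) + 1)) :: ν
  else
    match ((ν.filter (fun r => decide (r.2 = (b : ℤ) - 1 - 2 * Qcfg ν r.1))).map
        Prod.fst).max? with
    | none => ν
    | some i =>
      let ν' := ν.erase (i, (b : ℤ) - 1 - 2 * Qcfg ν i)
      ((i + 1 : ℕ), (b : ℤ) - 2 * (Qcfg ν' (i + 1) + ((i : ℤ) + 1))) :: ν'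

def rcAux : ℕ → Bool → List Bool → List (ℕ × ℤ) → List (ℕ × ℤ)
  | _, _, [], ν => ν
  | b, prev, a :: rest, ν => rcAux (b + 1) a rest (rcStep b prev a ν)

/-- The `A₁⁽¹⁾` rigged configuration bijection applied to a binary path
(`true` = 1, `false` = 0), returning the list of (row length, rigging) pairs. -/
def rcBij (p : List Bool) : List (ℕ × ℤ) := rcAux 1 false p []


/-! Every letter 1 adds at most one box to the configuration, so `|ν| ≤ λ₂`. Since
`Q_i(ν) ≤ |ν|`, strictly when some row is longer than `i`, and `L = λ₁ + λ₂` with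
`λ₁ > λ₂`, both bounds on `P_i(ν) = L - 2 Q_i(ν)` follow. -/

lemma Qcfg_le_sum_fst (ν : List (ℕ × ℤ)) (i : ℕ) :
    Qcfg ν i ≤ ((ν.map Prod.fst).sum : ℤ) := by
  rw [Nat.cast_list_sum, List.map_map]
  exact List.sum_le_sum fun r _ => by simp

lemma Qcfg_lt_sum_fst {ν : List (ℕ × ℤ)} {i : ℕ} (h : ∃ r ∈ ν, i < r.1) :
    Qcfg ν i < ((ν.map Prod.fst).sum : ℤ) := by
  rw [Nat.cast_list_sum, List.map_map]
  obtain ⟨r, hr, hi⟩ := h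
  exact List.sum_lt_sum _ _ (fun r _ => by simp) ⟨r, hr, by simpa using hi⟩

lemma sum_fst_rcStep_le (b : ℕ) (prev a : Bool) (ν : List (ℕ × ℤ)) :
    ((rcStep b prev a ν).map Prod.fst).sum ≤ (ν.map Prod.fst).sum + if a then 1 else 0 := by
  unfold rcStep
  cases a
  · simp
  cases prev
  · simp [Nat.add_comm]
  simp only [Bool.true_eq_false, if_false, if_true]
  split
  · simp
  · rename_i hmax
    obtain ⟨⟨i, J⟩, hr, rfl⟩ := List.mem_map.1 (List.max?_mem hmax)
    obtain ⟨hrν, hsingular⟩ := List.mem_filter.1 hr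
    obtain rfl : J = b - 1 - 2 * Qcfg ν i := of_decide_eq_true hsingular
    -- the singular row `(i, J)` is replaced by one of length `i + 1`
    have hperm := ((List.perm_cons_erase hrν).map Prod.fst).sum_eq
    simp only [List.map_cons, List.sum_cons] at hperm ⊢
    omega

lemma sum_fst_rcAux_le (rest : List Bool) (b : ℕ) (prev : Bool) (ν : List (ℕ × ℤ)) :
    ((rcAux b prev rest ν).map Prod.fst).sum ≤ (ν.map Prod.fst).sum + rest.count true := by
  induction rest generalizing b prev ν with
  | nil => simp [rcAux]
  | cons a rest ih =>
    have hrest := ih (b + 1) a (rcStep b prev a ν)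
    have hletter := sum_fst_rcStep_le b prev a ν
    rw [rcAux, List.count_cons]
    cases a <;>
      simp only [Bool.false_eq_true, beq_true, BEq.rfl, ↓reduceIte] at hletter ⊢ <;> omega

lemma sum_fst_rcBij_le (p : List Bool) : ((rcBij p).map Prod.fst).sum ≤ p.count true := by
  simpa [rcBij] using sum_fst_rcAux_le p 1 false []

/-- Lemma 3.9 of Kuniba–Takagi–Takenouchi: for a path with strictly more 0s
than 1s, the vacancy numbers `P_i(ν) = L - 2 Q_i(ν)` are strictly positive
for every `1 ≤ i < ν₁`, and `P_{ν₁}(ν) ≥ L - 2λ₂ ≥ 0`. -/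
theorem stmt15 (p : List Bool) (h : p.count true < p.count false) :
    (∀ i : ℕ, 1 ≤ i → (∃ r ∈ rcBij p, i < r.1) →
      0 < (p.length : ℤ) - 2 * Qcfg (rcBij p) i)
    ∧ ∀ i : ℕ, (∃ r ∈ rcBij p, r.1 = i) → (∀ r ∈ rcBij p, r.1 ≤ i) →
        (p.length : ℤ) - 2 * (p.count true : ℤ)
            ≤ (p.length : ℤ) - 2 * Qcfg (rcBij p) i
        ∧ 0 ≤ (p.length : ℤ) - 2 * (p.count true : ℤ) := by
  have hsize : (((rcBij p).map Prod.fst).sum : ℤ) ≤ p.count true := by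
    exact_mod_cast sum_fst_rcBij_le p
  have hlength : (p.length : ℤ) = p.count true + p.count false := by
    exact_mod_cast (List.count_true_add_count_false p).symm
  have hmore : (p.count true : ℤ) < p.count false := by exact_mod_cast h
  refine ⟨fun i _ hlonger => ?_, fun i _ _ => ?_⟩
  · linarith [Qcfg_lt_sum_fst hlonger]
  · constructor <;> linarith [Qcfg_le_sum_fst (rcBij p) i]
end

section
/- Let ν be a partition with m_i(ν) > 0 for some i and assume the vacancy number P_i(ν) ≥ 0 and that P_j(ν) > 0 for all j < ν_1 with m_j(ν) > 0. Then every equivalence class in 𝒥̄(ν)/⟨σ_j, constant shifts by L⟩ contains a representative J' with 0 ≤ J'_{1,i} ≤ J'_{2,i} ≤ ⋯ ≤ J'_{m_i,i} ≤ P_i(ν) for all i ∈ H. (Normalization of angle variables into the fundamental domain.) -/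
/-- The set `𝒥̄(ν)`: families `J i` of bi-infinite nondecreasing sequences
(one for each row length `i` with `m i ≠ 0`) with quasi-periodicity
`J_{k+m_i} = J_k + P_i(ν)`. -/
def JbarSet (m : ℕ → ℕ) (P : ℕ → ℤ) : Set (ℕ → ℤ → ℤ) :=
  {J | ∀ i, m i ≠ 0 →
    (∀ k, J i k ≤ J i (k + 1)) ∧ ∀ k, J i (k + (m i : ℤ)) = J i k + P i}

/-- The operator `σ_j : (J_{k,i}) ↦ (J_{k+δ_{ij},i} + 2 min(i,j))`. -/
def sigmaB (j : ℕ) (J : ℕ → ℤ → ℤ) : ℕ → ℤ → ℤ :=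
  fun i k => J i (k + if i = j then 1 else 0) + 2 * (min i j : ℤ)

/-- Generators of the equivalence: the operators `σ_j` and the constant shifts
`J ↦ J - d` (corresponding to cyclic shifts `T₁^d` of the path). -/
def shiftRel (A B : ℕ → ℤ → ℤ) : Prop :=
  (∃ j, B = sigmaB j A) ∨ (∃ d : ℤ, ∀ i k, B i k = A i k - d)

/-!
Let `N` be the longest row. A constant shift puts `0` into the window `[J N 0, J N 1]`.
The remaining rows are then treated from longer to shorter: `σ_j ^ z` followed by the constant
shift by `2 j z` fixes every row longer than `j` and moves row `j` by `z` positions, and since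
`P j > 0` the row `j` is unbounded in both directions, so some `z` puts `0` into its window.
Finally `0 ∈ [K i 0, K i 1]` gives `0 ≤ K i 1 ≤ ⋯ ≤ K i (m i) = K i 0 + P i ≤ P i`.
-/

lemma Int.exists_le_and_le_succ_of_monotone {f : ℤ → ℤ} (hf : Monotone f) {y : ℤ}
    (hlow : ∃ k, f k ≤ y) (hhigh : ∃ k, y < f k) : ∃ k, f k ≤ y ∧ y ≤ f (k + 1) := by
  obtain ⟨b, hb⟩ := hhigh
  have hbdd : ∃ b, ∀ k, f k ≤ y → k ≤ b :=
    ⟨b, fun k hk => le_of_lt (hf.reflect_lt (hk.trans_lt hb))⟩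
  obtain ⟨k, hk, hgreatest⟩ := Int.exists_greatest_of_bdd hbdd hlow
  refine ⟨k, hk, le_of_not_gt fun hlt => ?_⟩
  linarith [hgreatest (k + 1) hlt.le]

lemma Int.exists_le_and_le_succ_of_quasiPeriodic {f : ℤ → ℤ} {M p : ℤ} (hp : 0 < p)
    (hmono : ∀ k, f k ≤ f (k + 1)) (hper : ∀ k, f (k + M) = f k + p) (y : ℤ) :
    ∃ k, f k ≤ y ∧ y ≤ f (k + 1) := by
  have hiter : ∀ (n : ℕ) k, f (k + n * M) = f k + n * p := by
    intro n
    induction n with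
    | zero => simp
    | succ n ih => intro k; rw [Nat.cast_succ, add_mul, one_mul, ← add_assoc, hper, ih]; ring
  set n : ℕ := (f 0 - y).natAbs + 1
  have hn : |f 0 - y| < n * p := by
    have hnp : (n : ℤ) ≤ n * p := le_mul_of_one_le_right (by positivity) hp
    have hn : (n : ℤ) = |f 0 - y| + 1 := by simp [n]
    linarith
  refine Int.exists_le_and_le_succ_of_monotone (monotone_int_of_le_succ hmono) ⟨-(n * M), ?_⟩
    ⟨n * M, ?_⟩
  · have := hiter n (-(n * M))
    rw [neg_add_cancel] at this
    linarith [le_abs_self (f 0 - y)]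
  · have := hiter n 0
    rw [zero_add] at this
    linarith [neg_abs_le (f 0 - y)]

section Normalize

variable {m : ℕ → ℕ} {P : ℕ → ℤ}

lemma reindex_mem_JbarSet {J : ℕ → ℤ → ℤ} (hJ : J ∈ JbarSet m P)
    (z c : ℕ → ℤ) : (fun i k => J i (k + z i) + c i) ∈ JbarSet m P := by
  intro i hi
  refine ⟨fun k => ?_, fun k => ?_⟩
  · simp only [add_right_comm k 1]
    linarith [(hJ i hi).1 (k + z i)]
  · simp only [add_right_comm k, (hJ i hi).2]
    ring

def sigmaZpow (j : ℕ) (z : ℤ) (A : ℕ → ℤ → ℤ) : ℕ → ℤ → ℤ :=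
  fun i k => A i (k + if i = j then z else 0) + 2 * min (i : ℤ) j * z

lemma sigmaZpow_zero (j : ℕ) (A : ℕ → ℤ → ℤ) : sigmaZpow j 0 A = A := by
  funext i k
  simp [sigmaZpow]

lemma sigmaB_sigmaZpow (j : ℕ) (z : ℤ) (A : ℕ → ℤ → ℤ) :
    sigmaB j (sigmaZpow j z A) = sigmaZpow j (z + 1) A := by
  funext i k
  by_cases hij : i = j
  · simp only [sigmaB, sigmaZpow, hij, if_true]
    rw [show k + 1 + z = k + (z + 1) by ring]
    ring
  · simp only [sigmaB, sigmaZpow, hij, if_false, add_zero]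
    ring

lemma eqvGen_sigmaZpow (j : ℕ) (z : ℤ) (A : ℕ → ℤ → ℤ) :
    Relation.EqvGen shiftRel A (sigmaZpow j z A) := by
  induction z using Int.induction_on with
  | zero => rw [sigmaZpow_zero]; exact .refl A
  | succ z ih =>
    rw [← sigmaB_sigmaZpow]
    exact ih.trans _ _ _ (.rel _ _ (.inl ⟨j, rfl⟩))
  | pred z ih =>
    have hstep := sigmaB_sigmaZpow j (-z - 1) A
    rw [sub_add_cancel] at hstep
    rw [← hstep] at ih
    exact ih.trans _ _ _ (.symm _ _ (.rel _ _ (.inl ⟨j, rfl⟩)))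

lemma eqvGen_sub (A : ℕ → ℤ → ℤ) (d : ℤ) :
    Relation.EqvGen shiftRel A (fun i k => A i k - d) :=
  .rel _ _ (.inr ⟨d, fun _ _ => rfl⟩)

def IsNormalRow (K : ℕ → ℤ → ℤ) (i : ℕ) : Prop :=
  K i 0 ≤ 0 ∧ 0 ≤ K i 1

lemma exists_eqvGen_isNormalRow {A : ℕ → ℤ → ℤ} (hA : A ∈ JbarSet m P) {j : ℕ}
    (hj : m j ≠ 0) (hP : 0 < P j) :
    ∃ B, Relation.EqvGen shiftRel A B ∧ B ∈ JbarSet m P ∧ IsNormalRow B j ∧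
      ∀ i, j < i → B i = A i := by
  obtain ⟨z, hz⟩ :=
    Int.exists_le_and_le_succ_of_quasiPeriodic hP (hA j hj).1 (hA j hj).2 0
  refine ⟨fun i k => A i (k + if i = j then z else 0) + (2 * min (i : ℤ) j * z - 2 * j * z),
    ?_, reindex_mem_JbarSet hA _ _, ?_, fun i hji => ?_⟩
  · convert (eqvGen_sigmaZpow j z A).trans _ _ _ (eqvGen_sub _ (2 * j * z)) using 1
    funext i k
    simp only [sigmaZpow]
    ring
  · simpa [IsNormalRow, add_comm (1 : ℤ) z] using hz
  · funext k
    simp [(Nat.ne_of_lt hji).symm, min_eq_right (Nat.cast_le.mpr hji.le)]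

lemma exists_eqvGen_forall_isNormalRow (N : ℕ) (hP : ∀ j, m j ≠ 0 → j < N → 0 < P j)
    {A : ℕ → ℤ → ℤ} (hA : A ∈ JbarSet m P) (hN : ∀ i, m i ≠ 0 → N ≤ i → IsNormalRow A i) :
    ∃ K, Relation.EqvGen shiftRel A K ∧ K ∈ JbarSet m P ∧ ∀ i, m i ≠ 0 → IsNormalRow K i := by
  induction N generalizing A with
  | zero => exact ⟨A, .refl A, hA, fun i hi => hN i hi (Nat.zero_le i)⟩
  | succ N ih =>
    by_cases hmN : m N = 0
    · refine ih (fun j hj hjN => hP j hj (by omega)) hA fun i hi hNi => hN i hi ?_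
      rcases hNi.lt_or_eq with h | rfl
      · exact h
      · exact absurd hmN hi
    obtain ⟨B, hAB, hB, hBN, hBA⟩ := exists_eqvGen_isNormalRow hA hmN (hP N hmN N.lt_succ_self)
    obtain ⟨K, hBK, hK, hKnormal⟩ := ih (fun j hj hjN => hP j hj (by omega)) hB fun i hi hNi => by
      rcases hNi.lt_or_eq with h | rfl
      · simpa only [IsNormalRow, hBA i h] using hN i hi h
      · exact hBN
    exact ⟨K, hAB.trans _ _ _ hBK, hK, hKnormal⟩

end Normalize

theorem stmt18_general (m : ℕ → ℕ) (P : ℕ → ℤ)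
    (hfin : {i | m i ≠ 0}.Finite) (hne : {i | m i ≠ 0}.Nonempty)
    (hPpos : ∀ j, m j ≠ 0 → (∃ i, m i ≠ 0 ∧ j < i) → 0 < P j)
    (J : ℕ → ℤ → ℤ) (hJ : J ∈ JbarSet m P) :
    ∃ K : ℕ → ℤ → ℤ, Relation.EqvGen shiftRel J K ∧
      ∀ i, m i ≠ 0 →
        0 ≤ K i 1 ∧ (∀ k : ℤ, 1 ≤ k → k < m i → K i k ≤ K i (k + 1)) ∧
        K i (m i) ≤ P i := by
  obtain ⟨N, hN, hmax⟩ := Set.exists_max_image _ id hfin hne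
  have htop : ∀ i, m i ≠ 0 → N ≤ i → IsNormalRow (fun i k => J i k - J N 0) i := by
    intro i hi hNi
    obtain rfl : i = N := le_antisymm (hmax i hi) hNi
    exact ⟨(sub_self _).le, sub_nonneg.mpr ((hJ i hi).1 0)⟩
  obtain ⟨K, hJK, hK, hKnormal⟩ :=
    exists_eqvGen_forall_isNormalRow N (fun j hj hjN => hPpos j hj ⟨N, hN, hjN⟩)
      (by simpa [sub_eq_add_neg] using reindex_mem_JbarSet hJ 0 (fun _ => -J N 0)) htop
  refine ⟨K, (eqvGen_sub J (J N 0)).trans _ _ _ hJK, fun i hi => ⟨(hKnormal i hi).2,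
    fun k _ _ => (hK i hi).1 k, ?_⟩⟩
  have hper := (hK i hi).2 0
  rw [zero_add] at hper
  linarith [(hKnormal i hi).1]

/-- Normalization into the fundamental domain: if the vacancy numbers satisfy
`P_i ≥ 0` for all occurring row lengths and `P_j > 0` for all occurring `j`
smaller than the longest row length `ν₁`, then every `J ∈ 𝒥̄(ν)` is
equivalent, under the group generated by the `σ_j` and constant shifts, to a
representative `J'` with `0 ≤ J'_{1,i} ≤ ⋯ ≤ J'_{m_i,i} ≤ P_i` for every `i`
with `m i ≠ 0`. -/
theorem stmt18 (m : ℕ → ℕ) (P : ℕ → ℤ)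
    (hfin : {i | m i ≠ 0}.Finite) (hne : {i | m i ≠ 0}.Nonempty)
    (hP0 : ∀ i, m i ≠ 0 → 0 ≤ P i)
    (hPpos : ∀ j, m j ≠ 0 → (∃ i, m i ≠ 0 ∧ j < i) → 0 < P j)
    (J : ℕ → ℤ → ℤ) (hJ : J ∈ JbarSet m P) :
    ∃ K : ℕ → ℤ → ℤ, Relation.EqvGen shiftRel J K ∧
      ∀ i, m i ≠ 0 →
        0 ≤ K i 1 ∧ (∀ k : ℤ, 1 ≤ k → k < m i → K i k ≤ K i (k + 1)) ∧
        K i (m i) ≤ P i :=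
  stmt18_general m P hfin hne hPpos J hJ
end
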